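/- Let f' = x_f ∧ f'₂ ∧ ... ∧ f'_m be an LTL formula in definitional SNF with f'_i = G(α_i) for 2 ≤ i ≤ m and α₁ = x_f, and let ω(f') be the formula constructed with fresh variables x₁,...,x_m as in the MU-dec hardness reduction (with π_i = ⋁_{j≠i} x_j and the mirrored operands ϱ). If ω(f') is minimal unsatisfiable, then f' is satisfiable. -/

import Mathlib

/- LTL in negation normal form (negation only on propositional variables), with
standard semantics over linear time structures `M : ℕ → Set P`. -/

inductive LTL (P : Type) : Type
  | tt : LTL P
  | ff : LTL P
  | var : P → LTL P
  | nvar : P → LTL P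
  | and : LTL P → LTL P → LTL P
  | or : LTL P → LTL P → LTL P
  | next : LTL P → LTL P
  | unt : LTL P → LTL P → LTL P   -- strong until U
  | wunt : LTL P → LTL P → LTL P  -- weak until W
  deriving DecidableEq

def Sat {P : Type} (M : ℕ → Set P) : LTL P → ℕ → Prop
  | .tt, _ => True
  | .ff, _ => False
  | .var p, i => p ∈ M i
  | .nvar p, i => p ∉ M i
  | .and a b, i => Sat M a i ∧ Sat M b i
  | .or a b, i => Sat M a i ∨ Sat M b i
  | .next a, i => Sat M a (i + 1)
  | .unt a b, i => ∃ j, i ≤ j ∧ Sat M b j ∧ ∀ k, i ≤ k → k < j → Sat M a k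
  | .wunt a b, i =>
      (∀ j, i ≤ j → Sat M a j) ∨ (∃ j, i ≤ j ∧ Sat M b j ∧ ∀ k, i ≤ k → k < j → Sat M a k)

def LTL.G {P : Type} (a : LTL P) : LTL P := .wunt a .ff
def LTL.F {P : Type} (a : LTL P) : LTL P := .unt .tt a

def bigAnd {P : Type} (l : List (LTL P)) : LTL P := l.foldr .and .tt
def bigOr {P : Type} (l : List (LTL P)) : LTL P := l.foldr .or .ff

/- Definitional SNF data: an SNF formula `f' = x_f ∧ ⋀_i G(α_i)` is given by the fresh
variable `x_f : P` and a list `cs` of SNF LTL-clauses, each clause being a disjunction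
of operands: literals `l`, `X l`, or `F l`. -/

inductive Op (P : Type) : Type
  | lit : P → Bool → Op P   -- literal (variable, sign)
  | nxt : P → Bool → Op P   -- X l
  | ev : P → Bool → Op P    -- F l
  deriving DecidableEq

def litF {P : Type} (p : P) (b : Bool) : LTL P := if b then .var p else .nvar p

def Op.toLTL {P : Type} : Op P → LTL P
  | .lit p b => litF p b
  | .nxt p b => .next (litF p b)
  | .ev p b => LTL.F (litF p b)

/-- The mirror "ϱ": ϱ l = ∼l, ϱ(X l) = X(∼l), ϱ(F l) = G(∼l). -/
def Op.mirror {P : Type} : Op P → LTL P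
  | .lit p b => litF p (!b)
  | .nxt p b => .next (litF p (!b))
  | .ev p b => LTL.G (litF p (!b))

def Op.varOf {P : Type} : Op P → P
  | .lit p _ => p
  | .nxt p _ => p
  | .ev p _ => p

def LTL.rename {P Q : Type} (r : P → Q) : LTL P → LTL Q
  | .tt => .tt
  | .ff => .ff
  | .var p => .var (r p)
  | .nvar p => .nvar (r p)
  | .and a b => .and (a.rename r) (b.rename r)
  | .or a b => .or (a.rename r) (b.rename r)
  | .next a => .next (a.rename r)
  | .unt a b => .unt (a.rename r) (b.rename r)
  | .wunt a b => .wunt (a.rename r) (b.rename r)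

def clauseF {P : Type} (c : List (Op P)) : LTL P := bigOr (c.map Op.toLTL)

variable {P : Type} [DecidableEq P]

/-- `f' = x_f ∧ ⋀_{2 ≤ i ≤ m} G(α_i)`. -/
def fprime (xf : P) (cs : List (List (Op P))) : LTL P :=
  .and (.var xf) (bigAnd (cs.map fun c => LTL.G (clauseF c)))

/- The reduction formula ω(f') uses fresh variables x₁,…,x_m (m = cs.length + 1,
index 0 corresponding to x₁ and α₁ = x_f); its variable type is `P ⊕ Fin m`. -/

def xvar (cs : List (List (Op P))) (i : Fin (cs.length + 1)) : LTL (P ⊕ Fin (cs.length + 1)) :=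
  .var (Sum.inr i)

def nxvar (cs : List (List (Op P))) (i : Fin (cs.length + 1)) : LTL (P ⊕ Fin (cs.length + 1)) :=
  .nvar (Sum.inr i)

/-- π_i = ⋁_{j ≠ i} x_j. -/
def piF (cs : List (List (Op P))) (i : Fin (cs.length + 1)) : LTL (P ⊕ Fin (cs.length + 1)) :=
  bigOr ((((List.finRange (cs.length + 1)).filter (fun j => j ≠ i))).map (xvar cs))

def alphaF (xf : P) (cs : List (List (Op P))) (i : Fin (cs.length + 1)) :
    LTL (P ⊕ Fin (cs.length + 1)) :=
  if i.val = 0 then .var (Sum.inl xf) else (clauseF (cs.getD (i.val - 1) [])).rename Sum.inl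

def opsOf (cs : List (List (Op P))) (i : Fin (cs.length + 1)) : List (Op P) :=
  if i.val = 0 then [] else cs.getD (i.val - 1) []

/-- The list of conjuncts of ω(f'). -/
def omegaList (xf : P) (cs : List (List (Op P))) : List (LTL (P ⊕ Fin (cs.length + 1))) :=
  [.or (.next (xvar cs 0)) (.or (alphaF xf cs 0) (piF cs 0))]
  ++ ((List.finRange (cs.length + 1)).filter (fun i => i ≠ 0)).map
       (fun i => LTL.G (.or (alphaF xf cs i) (piF cs i)))
  ++ [.or (nxvar cs 0) (.or (.nvar (Sum.inl xf)) (piF cs 0))]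
  ++ ((List.finRange (cs.length + 1)).filter (fun i => i ≠ 0)).flatMap
       (fun i => (opsOf cs i).map
         (fun op => LTL.G (.or (op.mirror.rename Sum.inl) (.or (piF cs i) (nxvar cs i)))))
  ++ ((List.finRange (cs.length + 1)).filter (fun j => j ≠ 0)).map
       (fun j => .or (nxvar cs 0) (nxvar cs j))
  ++ (List.finRange (cs.length + 1)).flatMap
       (fun i => (List.finRange (cs.length + 1)).filterMap
         (fun j => if 0 < i.val ∧ i.val < j.val
                   then some (LTL.G (.or (nxvar cs i) (nxvar cs j))) else none))
  ++ [.or (LTL.G (.next (nxvar cs 0))) (piF cs 0)]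
  ++ [bigOr ((List.finRange (cs.length + 1)).map (xvar cs))]

def omegaF (xf : P) (cs : List (List (Op P))) : LTL (P ⊕ Fin (cs.length + 1)) :=
  bigAnd (omegaList xf cs)

/-- Side conditions guaranteed by the definitional SNF transformation: no two operands
under the same `G` share a propositional variable, and the conjunction of the
`G(α_i)` (without `x_f`) has a model setting `x_f` to FALSE at time 0. -/
def SNFside (xf : P) (cs : List (List (Op P))) : Prop :=
  (∀ c ∈ cs, (c.map Op.varOf).Nodup) ∧
  ∃ M : ℕ → Set P, (∀ c ∈ cs, Sat M (LTL.G (clauseF c)) 0) ∧ xf ∉ M 0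

/-- ω(f') is minimal unsatisfiable: unsatisfiable, but removing (weakening to TRUE)
any single conjunct yields a satisfiable formula. -/
def MUomega (xf : P) (cs : List (List (Op P))) : Prop :=
  (¬ ∃ M, Sat M (omegaF xf cs) 0) ∧
  ∀ g ∈ omegaList xf cs, ∃ M, Sat M (bigAnd ((omegaList xf cs).erase g)) 0

/-!
Dropping the conjunct `x₁ ∨ ⋯ ∨ x_m` leaves, by minimality, a model `N` of `λ(f')`. In `N` no
`x_i` is ever true. At time `0` that would make `N` a model of `ω(f')`. Hence `π₁` is false at
time `0`, so the conjunct `G(X ¬x₁) ∨ π₁` keeps `x₁` false from then on; if some `x_i` were true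
at a later time `t`, every conjunct of `ω(f')` would hold at `t` (the `G`-conjuncts everywhere,
the others through `¬x₁` or `π₁`), and the suffix of `N` from `t` would model `ω(f')`.
With every `x_i` false, all `π_i` are false, and the conjuncts `X x₁ ∨ x_f ∨ π₁` and
`G(α_i ∨ π_i)` say that `N`, restricted to the original variables, is a model of `f'`.
-/

section Semantics

variable {Q : Type}

lemma sat_bigAnd (M : ℕ → Set Q) (l : List (LTL Q)) (i : ℕ) :
    Sat M (bigAnd l) i ↔ ∀ g ∈ l, Sat M g i := by
  induction l with
  | nil => simp [bigAnd, Sat]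
  | cons a l ih => simp_all [bigAnd, Sat]

lemma sat_bigOr (M : ℕ → Set Q) (l : List (LTL Q)) (i : ℕ) :
    Sat M (bigOr l) i ↔ ∃ g ∈ l, Sat M g i := by
  induction l with
  | nil => simp [bigOr, Sat]
  | cons a l ih => simp_all [bigOr, Sat]

lemma sat_G (M : ℕ → Set Q) (a : LTL Q) (i : ℕ) :
    Sat M (LTL.G a) i ↔ ∀ j, i ≤ j → Sat M a j := by
  simp [LTL.G, Sat]

lemma Sat.G_mono {M : ℕ → Set Q} {a : LTL Q} {i j : ℕ} (h : Sat M (LTL.G a) i) (hij : i ≤ j) :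
    Sat M (LTL.G a) j := by
  rw [sat_G] at h ⊢
  exact fun k hk => h k (hij.trans hk)

lemma sat_rename {R : Type} (r : Q → R) (φ : LTL Q) (M : ℕ → Set R) (i : ℕ) :
    Sat M (φ.rename r) i ↔ Sat (fun s => {p | r p ∈ M s}) φ i := by
  induction φ generalizing i <;> simp [LTL.rename, Sat, *]

lemma sat_suffix (M : ℕ → Set Q) (t : ℕ) (φ : LTL Q) (i : ℕ) :
    Sat (fun k => M (k + t)) φ i ↔ Sat M φ (i + t) := by
  induction φ generalizing i with
  | unt a b iha ihb =>
    simp only [Sat, iha, ihb]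
    constructor
    · rintro ⟨j, hij, hb, ha⟩
      refine ⟨j + t, by omega, hb, fun k h1 h2 => ?_⟩
      obtain ⟨k, rfl⟩ := Nat.exists_eq_add_of_le' (show t ≤ k by omega)
      exact ha k (by omega) (by omega)
    · rintro ⟨j, hij, hb, ha⟩
      obtain ⟨j, rfl⟩ := Nat.exists_eq_add_of_le' (show t ≤ j by omega)
      exact ⟨j, by omega, hb, fun k h1 h2 => ha (k + t) (by omega) (by omega)⟩
  | wunt a b iha ihb =>
    simp only [Sat, iha, ihb]
    constructor
    · rintro (h | ⟨j, hij, hb, ha⟩)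
      · refine .inl fun j hj => ?_
        obtain ⟨j, rfl⟩ := Nat.exists_eq_add_of_le' (show t ≤ j by omega)
        exact h j (by omega)
      · refine .inr ⟨j + t, by omega, hb, fun k h1 h2 => ?_⟩
        obtain ⟨k, rfl⟩ := Nat.exists_eq_add_of_le' (show t ≤ k by omega)
        exact ha k (by omega) (by omega)
    · rintro (h | ⟨j, hij, hb, ha⟩)
      · exact .inl fun j hj => h (j + t) (by omega)
      · obtain ⟨j, rfl⟩ := Nat.exists_eq_add_of_le' (show t ≤ j by omega)
        exact .inr ⟨j, by omega, hb, fun k h1 h2 => ha (k + t) (by omega) (by omega)⟩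
  | next a ih => simp [Sat, ih, Nat.add_right_comm]
  | _ => simp_all [Sat]

lemma not_sat_of_unsatisfiable {φ : LTL Q} (h : ¬ ∃ M, Sat M φ 0) (M : ℕ → Set Q) (t : ℕ) :
    ¬ Sat M φ t := fun hM =>
  h ⟨fun k => M (k + t), (sat_suffix M t φ 0).2 (by rwa [Nat.zero_add])⟩

end Semantics

section Reduction

variable {V : Type} (xf : V) (cs : List (List (Op V)))

def xDisj : LTL (V ⊕ Fin (cs.length + 1)) :=
  bigOr ((List.finRange (cs.length + 1)).map (xvar cs))

lemma xDisj_eq :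
    xDisj cs =
      .or (xvar cs 0) (bigOr (((List.finRange cs.length).map Fin.succ).map (xvar cs))) := by
  rw [xDisj, List.finRange_succ]
  rfl

variable {cs} in
lemma sat_xDisj (M : ℕ → Set (V ⊕ Fin (cs.length + 1))) (t : ℕ) :
    Sat M (xDisj cs) t ↔ ∃ i, Sum.inr i ∈ M t := by
  simp [xDisj, sat_bigOr, xvar, Sat]

variable {cs} in
lemma sat_piF (i : Fin (cs.length + 1)) (M : ℕ → Set (V ⊕ Fin (cs.length + 1))) (t : ℕ) :
    Sat M (piF cs i) t ↔ ∃ j, j ≠ i ∧ Sum.inr j ∈ M t := by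
  simp [piF, sat_bigOr, xvar, Sat]

lemma xDisj_mem_omegaList : xDisj cs ∈ omegaList xf cs := by
  simp [omegaList, xDisj]

lemma G_alphaF_succ_mem_omegaList (k : Fin cs.length) :
    LTL.G (.or (alphaF xf cs k.succ) (piF cs k.succ)) ∈ omegaList xf cs := by
  simp only [omegaList, List.mem_append, List.mem_map]
  grind [Fin.succ_ne_zero]

lemma alphaF_succ (k : Fin cs.length) :
    alphaF xf cs k.succ = (clauseF cs[k]).rename Sum.inl := by
  simp [alphaF]

lemma mem_omegaList_cases {g : LTL (V ⊕ Fin (cs.length + 1))} (hg : g ∈ omegaList xf cs) :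
    (∃ φ, g = LTL.G φ) ∨ (∃ φ, g = .or (nxvar cs 0) φ) ∨
      g = .or (.next (xvar cs 0)) (.or (alphaF xf cs 0) (piF cs 0)) ∨
      g = .or (LTL.G (.next (nxvar cs 0))) (piF cs 0) ∨ g = xDisj cs := by
  simp only [omegaList, List.mem_append, List.mem_singleton, List.mem_map,
    List.mem_flatMap, List.mem_filterMap, Option.ite_none_right_eq_some,
    Option.some.injEq] at hg
  rcases hg with ((((((rfl | ⟨_, _, rfl⟩) | rfl) | ⟨_, _, _, _, rfl⟩) | ⟨_, _, rfl⟩)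
    | ⟨_, _, _, _, _, rfl⟩) | rfl) | rfl <;> simp [xDisj]

end Reduction

section LambdaModel

variable {V : Type} [DecidableEq V] {xf : V} {cs : List (List (Op V))}
  {N : ℕ → Set (V ⊕ Fin (cs.length + 1))}

variable (xf cs) in
/-- The formula `λ(f')`. -/
def lambdaF : LTL (V ⊕ Fin (cs.length + 1)) :=
  bigAnd ((omegaList xf cs).erase (xDisj cs))

lemma sat_of_mem_omegaList_of_ne (hN : Sat N (lambdaF xf cs) 0)
    {g : LTL (V ⊕ Fin (cs.length + 1))} (hg : g ∈ omegaList xf cs) (hne : g ≠ xDisj cs) :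
    Sat N g 0 :=
  (sat_bigAnd N _ 0).1 hN g ((List.mem_erase_of_ne hne).2 hg)

lemma sat_G_of_mem_omegaList (hN : Sat N (lambdaF xf cs) 0)
    {φ : LTL (V ⊕ Fin (cs.length + 1))} (hφ : LTL.G φ ∈ omegaList xf cs) (t : ℕ) :
    Sat N (LTL.G φ) t :=
  (sat_of_mem_omegaList_of_ne hN hφ (by simp [xDisj_eq, LTL.G])).G_mono t.zero_le

lemma xvar_not_mem_zero (hω : ¬ ∃ M, Sat M (omegaF xf cs) 0)
    (hN : Sat N (lambdaF xf cs) 0) (i : Fin (cs.length + 1)) :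
    Sum.inr i ∉ N 0 := by
  intro hi
  refine not_sat_of_unsatisfiable hω N 0 ((sat_bigAnd N _ 0).2 fun g hg => ?_)
  by_cases hg' : g = xDisj cs
  · exact hg' ▸ (sat_xDisj N 0).2 ⟨i, hi⟩
  · exact sat_of_mem_omegaList_of_ne hN hg hg'

lemma xvar_zero_not_mem (hω : ¬ ∃ M, Sat M (omegaF xf cs) 0)
    (hN : Sat N (lambdaF xf cs) 0) (t : ℕ) :
    Sum.inr 0 ∉ N t := by
  have h := sat_of_mem_omegaList_of_ne hN
    (g := .or (LTL.G (.next (nxvar cs 0))) (piF cs 0)) (by simp [omegaList])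
    (by simp [xDisj_eq, LTL.G, xvar])
  rcases h with hG | hπ
  · cases t with
    | zero => exact xvar_not_mem_zero hω hN 0
    | succ t => exact (sat_G N _ 0).1 hG t t.zero_le
  · obtain ⟨j, -, hj⟩ := (sat_piF 0 N 0).1 hπ
    exact absurd hj (xvar_not_mem_zero hω hN j)

lemma xvar_not_mem (hω : ¬ ∃ M, Sat M (omegaF xf cs) 0)
    (hN : Sat N (lambdaF xf cs) 0) (t : ℕ)
    (i : Fin (cs.length + 1)) : Sum.inr i ∉ N t := by
  intro hi
  cases t with
  | zero => exact xvar_not_mem_zero hω hN i hi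
  | succ t =>
    have hπ : Sat N (piF cs 0) (t + 1) :=
      (sat_piF 0 N _).2 ⟨i, fun h => xvar_zero_not_mem hω hN (t + 1) (h ▸ hi), hi⟩
    have hx₁ := xvar_zero_not_mem hω hN (t + 1)
    refine not_sat_of_unsatisfiable hω N (t + 1) ((sat_bigAnd N _ _).2 fun g hg => ?_)
    rcases mem_omegaList_cases xf cs hg with ⟨φ, rfl⟩ | ⟨φ, rfl⟩ | rfl | rfl | rfl
    · exact sat_G_of_mem_omegaList hN hg _
    · exact .inl hx₁
    · exact .inr (.inr hπ)
    · exact .inr hπ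
    · exact (sat_xDisj N _).2 ⟨i, hi⟩

lemma sat_fprime_restrict (hω : ¬ ∃ M, Sat M (omegaF xf cs) 0)
    (hN : Sat N (lambdaF xf cs) 0) :
    Sat (fun s => {p | Sum.inl p ∈ N s}) (fprime xf cs) 0 := by
  have hπ (i : Fin (cs.length + 1)) (t : ℕ) : ¬ Sat N (piF cs i) t := fun h => by
    obtain ⟨j, -, hj⟩ := (sat_piF i N t).1 h
    exact xvar_not_mem hω hN t j hj
  refine ⟨?_, (sat_bigAnd _ _ 0).2 ?_⟩
  · have h := sat_of_mem_omegaList_of_ne hN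
      (g := .or (.next (xvar cs 0)) (.or (alphaF xf cs 0) (piF cs 0))) (by simp [omegaList])
      (by simp [xDisj_eq, xvar])
    rcases h with hx₁ | hxf | h
    · exact absurd hx₁ (xvar_not_mem hω hN 1 0)
    · simpa [alphaF, Sat] using hxf
    · exact absurd h (hπ 0 0)
  · simp only [List.mem_map]
    rintro _ ⟨c, hc, rfl⟩
    obtain ⟨k, rfl⟩ := List.mem_iff_get.1 hc
    refine (sat_G _ _ 0).2 fun t _ => ?_
    rcases (sat_G N _ 0).1 (sat_G_of_mem_omegaList hN (G_alphaF_succ_mem_omegaList xf cs k) 0)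
      t t.zero_le with h | h
    · rwa [alphaF_succ, sat_rename] at h
    · exact absurd h (hπ _ t)

end LambdaModel

theorem stmt13_general (xf : P) (cs : List (List (Op P)))
    (hMU : MUomega xf cs) : ∃ M : ℕ → Set P, Sat M (fprime xf cs) 0 := by
  obtain ⟨hω, hmin⟩ := hMU
  obtain ⟨N, hN⟩ := hmin (xDisj cs) (xDisj_mem_omegaList xf cs)
  exact ⟨_, sat_fprime_restrict hω hN⟩

/-- If ω(f') is minimal unsatisfiable then f' is satisfiable. -/
theorem stmt13 (xf : P) (cs : List (List (Op P))) (hsnf : SNFside xf cs)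
    (hMU : MUomega xf cs) : ∃ M : ℕ → Set P, Sat M (fprime xf cs) 0 :=
  stmt13_general xf cs hMU
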